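/- arXiv:2111.02734 — 2 statements merged into one kernel-verified Lean document; each statement's English description precedes it below -/
import Mathlib

section
/- Let t ≥ 2 be an integer and let G be a finite connected simple graph with at least one edge such that cp^{(t)}(G) = ρ(G) − t + 1 + ⌈δ(G)/(t−1)⌉. Then t−1 divides δ(G), G is regular of degree δ(G), and G admits a K_t-decomposition in which any two distinct cliques intersect in exactly one vertex (equivalently, G is the block graph of a 2-(v,k,1) design with k = δ(G)/(t−1) and v = k·|V(G)|/t). -/
/-!
Let `x` be a positive Perron eigenvector of `G` and `P` an optimal clique partition with cliques
of at most `t` vertices. Counting the cliques through each pair of vertices gives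
`∑_Q (∑_{v∈Q} x_v)² = ρ ‖x‖² + ∑_v m_v x_v²`, where `m_v ≥ ⌈δ/(t-1)⌉` is the number of cliques
through `v`. By Cauchy–Schwarz and Schur's test for the intersection matrix `(|Q ∩ R|)_{Q,R}`,
whose row sums are at most `|Q| + (|P| - 1) ≤ |P| + t - 1`, the left side is at most
`(|P| + t - 1) ‖x‖²`. Equality therefore forces `m_v = ⌈δ/(t-1)⌉` at every vertex and every row sum
to be extremal: every clique has `t` vertices and meets every other clique in exactly one vertex.
Then `deg v = m_v (t - 1)` is the same for all `v`.
-/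

open Finset SimpleGraph Polynomial

variable {V : Type*}

/-- A clique partition of `G`: a set of cliques of `G` such that every edge of `G`
lies in exactly one of them. -/
def IsCliquePartition [DecidableEq V] (G : SimpleGraph V) (P : Finset (Finset V)) : Prop :=
  (∀ s ∈ P, G.IsClique (s : Set V)) ∧
    ∀ u v : V, G.Adj u v → ∃! s, s ∈ P ∧ u ∈ s ∧ v ∈ s

/-- The spectral radius of a finite graph: the largest eigenvalue of its adjacency matrix. -/
noncomputable def specRad [Fintype V] [DecidableEq V] (G : SimpleGraph V)
    [DecidableRel G.Adj] : ℝ :=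
  sSup {μ : ℝ | Module.End.HasEigenvalue (Matrix.toLin' (G.adjMatrix ℝ)) μ}

/-- `cpT G t` : the minimum number of cliques in a clique partition of `G` in which
every clique has at most `t` vertices. -/
noncomputable def cpT [DecidableEq V] (G : SimpleGraph V) (t : ℕ) : ℕ :=
  sInf {m | ∃ P : Finset (Finset V),
    IsCliquePartition G P ∧ (∀ s ∈ P, s.card ≤ t) ∧ P.card = m}

/-- `cp G` : the clique partition number of `G`. -/
noncomputable def cp [DecidableEq V] (G : SimpleGraph V) : ℕ :=
  sInf {m | ∃ P : Finset (Finset V), IsCliquePartition G P ∧ P.card = m}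

namespace Finset

variable {α β : Type*} {R : Type*} [CommSemiring R]

lemma sum_mul_sum_filter_comm (A : Finset α) (B : Finset β) (r : α → β → Prop)
    [∀ a b, Decidable (r a b)] (f : α → R) (g : β → R) :
    ∑ a ∈ A, f a * ∑ b ∈ B with r a b, g b = ∑ b ∈ B, g b * ∑ a ∈ A with r a b, f a := by
  simp only [sum_filter, mul_sum, mul_ite, mul_zero]
  rw [sum_comm]
  exact sum_congr rfl fun b _ => sum_congr rfl fun a _ => by rw [mul_comm]

lemma sum_sq_sum_filter (A : Finset α) (B : Finset β) (r : α → β → Prop)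
    [∀ a b, Decidable (r a b)] (f : β → R) :
    ∑ a ∈ A, (∑ b ∈ B with r a b, f b) ^ 2 =
      ∑ b ∈ B, ∑ b' ∈ B, (#{a ∈ A | r a b ∧ r a b'} : R) * (f b * f b') := by
  simp only [sq, sum_mul_sum, sum_filter, ite_mul, mul_ite, zero_mul, mul_zero, ← ite_and]
  rw [sum_comm]
  refine sum_congr rfl fun b _ => ?_
  rw [sum_comm]
  refine sum_congr rfl fun b' _ => ?_
  rw [← sum_filter, sum_const, nsmul_eq_mul]
  simp_rw [and_comm]

variable {ι : Type*}

/-- Schur's test for a symmetric nonnegative kernel, via `2 f i f j ≤ f i ^ 2 + f j ^ 2`. -/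
lemma sum_sum_mul_mul_le_sum_sum_mul_sq (s : Finset ι) {w : ι → ι → ℝ} (hw : ∀ i j, 0 ≤ w i j)
    (hw_symm : ∀ i j, w i j = w j i) (f : ι → ℝ) :
    ∑ i ∈ s, ∑ j ∈ s, w i j * (f i * f j) ≤ ∑ i ∈ s, (∑ j ∈ s, w i j) * f i ^ 2 := by
  have hswap : ∑ i ∈ s, ∑ j ∈ s, w i j * f j ^ 2 = ∑ i ∈ s, ∑ j ∈ s, w i j * f i ^ 2 := by
    rw [sum_comm]
    simp_rw [hw_symm]
  have hamgm : ∑ i ∈ s, ∑ j ∈ s, 2 * (w i j * (f i * f j)) ≤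
      ∑ i ∈ s, ∑ j ∈ s, (w i j * f i ^ 2 + w i j * f j ^ 2) :=
    sum_le_sum fun i _ => sum_le_sum fun j _ => by
      nlinarith [mul_nonneg (hw i j) (sq_nonneg (f i - f j))]
  simp only [← mul_sum, sum_add_distrib, hswap, sum_mul] at hamgm ⊢
  linarith

lemma eq_of_le_of_sum_mul_le {s : Finset ι} {a b w : ι → ℝ} (hab : ∀ i ∈ s, a i ≤ b i)
    (hw : ∀ i ∈ s, 0 < w i) (h : ∑ i ∈ s, b i * w i ≤ ∑ i ∈ s, a i * w i) :
    ∀ i ∈ s, a i = b i := by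
  by_contra! ⟨i, hi, hne⟩
  refine (sum_lt_sum (fun j hj => mul_le_mul_of_nonneg_right (hab j hj) (hw j hj).le)
    ⟨i, hi, mul_lt_mul_of_pos_right ((hab i hi).lt_of_ne hne) (hw i hi)⟩).not_ge h

end Finset

namespace Matrix

variable {n : Type*} [Fintype n] {A : Matrix n n ℝ}

lemma dotProduct_mulVec_le_abs_of_nonneg (hA : ∀ i j, 0 ≤ A i j) (x : n → ℝ) :
    x ⬝ᵥ A *ᵥ x ≤ (fun i => |x i|) ⬝ᵥ A *ᵥ fun i => |x i| := by
  simp only [dotProduct, mulVec, mul_sum]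
  refine sum_le_sum fun i _ => sum_le_sum fun j _ => ?_
  calc x i * (A i j * x j) ≤ |x i * (A i j * x j)| := le_abs_self _
    _ = |x i| * (A i j * |x j|) := by rw [abs_mul, abs_mul, abs_of_nonneg (hA i j)]

variable [DecidableEq n]

open scoped MatrixOrder in
lemma IsHermitian.posSemidef_algebraMap_sSup_spectrum_sub (hA : A.IsHermitian) :
    (algebraMap ℝ (Matrix n n ℝ) (sSup (spectrum ℝ A)) - A).PosSemidef :=
  le_algebraMap_of_spectrum_le fun _ hμ => le_csSup A.finite_real_spectrum.bddAbove hμ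

/-- Perron–Frobenius for symmetric nonnegative matrices: if `x` is an eigenvector for the top
eigenvalue `r`, then `|x|` attains the maximum `r` of the Rayleigh quotient, so `(r - A) |x|`
vanishes because `r - A` is positive semidefinite. -/
theorem IsHermitian.exists_nonneg_mulVec_eq_sSup_spectrum_smul [Nonempty n] (hA : A.IsHermitian)
    (hA0 : ∀ i j, 0 ≤ A i j) :
    ∃ y : n → ℝ, y ≠ 0 ∧ (∀ i, 0 ≤ y i) ∧ A *ᵥ y = sSup (spectrum ℝ A) • y := by
  set r := sSup (spectrum ℝ A)
  have hr : r ∈ spectrum ℝ A := Set.Nonempty.csSup_mem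
    ⟨_, hA.eigenvalues_mem_spectrum_real (Classical.arbitrary n)⟩ A.finite_real_spectrum
  rw [← spectrum_toLin', ← Module.End.hasEigenvalue_iff_mem_spectrum] at hr
  obtain ⟨x, hx⟩ := hr.exists_hasEigenvector
  have hAx : A *ᵥ x = r • x := by simpa using hx.apply_eq_smul
  set y : n → ℝ := fun i => |x i|
  have hB := hA.posSemidef_algebraMap_sSup_spectrum_sub
  have hBy : y ⬝ᵥ (algebraMap ℝ (Matrix n n ℝ) r - A) *ᵥ y = 0 := by
    refine le_antisymm ?_ (by simpa using hB.dotProduct_mulVec_nonneg y)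
    have hyy : y ⬝ᵥ y = x ⬝ᵥ x := by simp [y, dotProduct, abs_mul_abs_self]
    have := dotProduct_mulVec_le_abs_of_nonneg hA0 x
    simp only [sub_mulVec, dotProduct_sub, Algebra.algebraMap_eq_smul_one, smul_mulVec, one_mulVec,
      dotProduct_smul, hyy, hAx, smul_eq_mul] at this ⊢
    linarith
  refine ⟨y, fun h => hx.2 ?_, fun i => abs_nonneg _, ?_⟩
  · ext i; simpa [y] using congrFun h i
  · have := (hB.dotProduct_mulVec_zero_iff y).mp (by simpa using hBy)
    rw [sub_mulVec, sub_eq_zero, Algebra.algebraMap_eq_smul_one, smul_mulVec, one_mulVec] at this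
    exact this.symm

end Matrix

open Matrix

namespace SimpleGraph

variable [Fintype V] {G : SimpleGraph V} [DecidableRel G.Adj]

lemma Connected.pos_of_adjMatrix_mulVec_eq_smul (hG : G.Connected) {y : V → ℝ} {r : ℝ}
    (hy0 : y ≠ 0) (hy : ∀ v, 0 ≤ y v) (hAy : G.adjMatrix ℝ *ᵥ y = r • y) (v : V) : 0 < y v := by
  have hzero_adj : ∀ {u w}, G.Adj u w → y u = 0 → y w = 0 := fun {u w} huw hu => by
    have hsum : ∑ w ∈ G.neighborFinset u, y w = 0 := by
      rw [← adjMatrix_mulVec_apply, hAy, Pi.smul_apply, hu, smul_zero]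
    exact (sum_eq_zero_iff_of_nonneg fun w _ => hy w).mp hsum w (by simpa using huw)
  have hzero_walk : ∀ {u w} (p : G.Walk u w), y u = 0 → y w = 0 := fun p => by
    induction p with
    | nil => exact id
    | cons huw _ ih => exact fun hu => ih (hzero_adj huw hu)
  obtain ⟨w, hw⟩ := Function.ne_iff.mp hy0
  refine (hy v).lt_of_ne fun hv => hw ?_
  exact hzero_walk (hG.preconnected v w).some hv.symm

variable [DecidableEq V]

lemma specRad_eq_sSup_spectrum : specRad G = sSup (spectrum ℝ (G.adjMatrix ℝ)) := by
  simp only [specRad, Module.End.hasEigenvalue_iff_mem_spectrum, spectrum_toLin',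
    Set.ofPred_mem_eq]

lemma Connected.exists_pos_adjMatrix_mulVec_eq_specRad_smul (hG : G.Connected) :
    ∃ x : V → ℝ, (∀ v, 0 < x v) ∧ G.adjMatrix ℝ *ᵥ x = specRad G • x := by
  have := hG.nonempty
  obtain ⟨y, hy0, hy, hAy⟩ := (isHermitian_iff_isSymm.mpr G.isSymm_adjMatrix)
    |>.exists_nonneg_mulVec_eq_sSup_spectrum_smul fun i j => by
      rw [adjMatrix_apply]; split_ifs <;> norm_num
  rw [← specRad_eq_sSup_spectrum] at hAy
  exact ⟨y, hG.pos_of_adjMatrix_mulVec_eq_smul hy0 hy hAy, hAy⟩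

end SimpleGraph

section CliqueSums

variable [Fintype V] [DecidableEq V]

lemma sq_sum_sq_sum_le_sum_sq_mul (P : Finset (Finset V)) (x : V → ℝ) :
    (∑ Q ∈ P, (∑ v ∈ Q, x v) ^ 2) ^ 2 ≤
      (∑ v, x v ^ 2) * ∑ Q ∈ P, (∑ R ∈ P, (#(Q ∩ R) : ℝ)) * (∑ v ∈ Q, x v) ^ 2 := by
  set g : V → ℝ := fun v => ∑ Q ∈ P with v ∈ Q, ∑ u ∈ Q, x u
  have hS : ∑ Q ∈ P, (∑ v ∈ Q, x v) ^ 2 = ∑ v, x v * g v := by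
    rw [sum_mul_sum_filter_comm]
    simp [sq]
  have hg : ∑ v, g v ^ 2 =
      ∑ Q ∈ P, ∑ R ∈ P, (#(Q ∩ R) : ℝ) * ((∑ v ∈ Q, x v) * ∑ v ∈ R, x v) := by
    rw [sum_sq_sum_filter]
    simp only [filter_and, filter_univ_mem]
  calc _ = (∑ v, x v * g v) ^ 2 := by rw [hS]
    _ ≤ (∑ v, x v ^ 2) * ∑ v, g v ^ 2 := sum_mul_sq_le_sq_mul_sq _ _ _
    _ ≤ _ := by
      rw [hg]
      exact mul_le_mul_of_nonneg_left (sum_sum_mul_mul_le_sum_sum_mul_sq P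
        (w := fun Q R => (#(Q ∩ R) : ℝ)) (fun _ _ => Nat.cast_nonneg _)
        (fun Q R => by rw [inter_comm]) _) (sum_nonneg fun v _ => sq_nonneg _)

variable {P : Finset (Finset V)} {x : V → ℝ} {c : ℝ}

lemma sum_sq_sum_le_mul_sum_sq (hc : ∀ Q ∈ P, ∑ R ∈ P, (#(Q ∩ R) : ℝ) ≤ c) (hc0 : 0 ≤ c) :
    ∑ Q ∈ P, (∑ v ∈ Q, x v) ^ 2 ≤ c * ∑ v, x v ^ 2 := by
  have hT : ∑ Q ∈ P, (∑ R ∈ P, (#(Q ∩ R) : ℝ)) * (∑ v ∈ Q, x v) ^ 2 ≤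
      c * ∑ Q ∈ P, (∑ v ∈ Q, x v) ^ 2 := by
    rw [mul_sum]
    exact sum_le_sum fun Q hQ => mul_le_mul_of_nonneg_right (hc Q hQ) (sq_nonneg _)
  rcases (sum_nonneg fun Q _ => sq_nonneg _ : 0 ≤ ∑ Q ∈ P, (∑ v ∈ Q, x v) ^ 2).eq_or_lt
    with hS | hS
  · rw [← hS]
    exact mul_nonneg hc0 (sum_nonneg fun v _ => sq_nonneg _)
  · refine le_of_mul_le_mul_left ?_ hS
    nlinarith [sq_sum_sq_sum_le_sum_sq_mul P x, sum_nonneg fun v (_ : v ∈ univ) => sq_nonneg (x v)]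

lemma sum_card_inter_eq_of_mul_sum_sq_le (hc : ∀ Q ∈ P, ∑ R ∈ P, (#(Q ∩ R) : ℝ) ≤ c)
    (hx : ∀ v, 0 < x v) (hP : ∀ Q ∈ P, Q.Nonempty)
    (h : c * ∑ v, x v ^ 2 ≤ ∑ Q ∈ P, (∑ v ∈ Q, x v) ^ 2) {Q : Finset V} (hQ : Q ∈ P) :
    ∑ R ∈ P, (#(Q ∩ R) : ℝ) = c := by
  have hX : 0 < ∑ v, x v ^ 2 :=
    sum_pos (fun v _ => pow_pos (hx v) 2) ⟨(hP Q hQ).choose, mem_univ _⟩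
  have hcS : c * ∑ Q ∈ P, (∑ v ∈ Q, x v) ^ 2 ≤
      ∑ Q ∈ P, (∑ R ∈ P, (#(Q ∩ R) : ℝ)) * (∑ v ∈ Q, x v) ^ 2 := by
    refine le_of_mul_le_mul_left ?_ hX
    nlinarith [sq_sum_sq_sum_le_sum_sq_mul P x,
      (sum_nonneg fun Q _ => sq_nonneg _ : 0 ≤ ∑ Q ∈ P, (∑ v ∈ Q, x v) ^ 2)]
  rw [mul_sum] at hcS
  exact eq_of_le_of_sum_mul_le hc
    (fun R hR => pow_pos (sum_pos (fun v _ => hx v) (hP R hR)) 2) hcS Q hQ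

end CliqueSums

section RowSums

variable [DecidableEq V] {P : Finset (Finset V)} {Q : Finset V} {t : ℕ}

lemma sum_card_inter_eq_card_add (hQ : Q ∈ P) :
    ∑ R ∈ P, #(Q ∩ R) = #Q + ∑ R ∈ P.erase Q, #(Q ∩ R) := by
  rw [← add_sum_erase P _ hQ, inter_self]

lemma sum_card_inter_add_one_le (hQ : Q ∈ P) (hQt : #Q ≤ t)
    (h1 : ∀ R ∈ P, R ≠ Q → #(Q ∩ R) ≤ 1) : ∑ R ∈ P, #(Q ∩ R) + 1 ≤ #P + t := by
  have hle : ∑ R ∈ P.erase Q, #(Q ∩ R) ≤ #(P.erase Q) * 1 :=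
    sum_le_card_nsmul _ _ _ fun R hR => h1 R (mem_of_mem_erase hR) (ne_of_mem_erase hR)
  have := card_erase_add_one hQ
  rw [sum_card_inter_eq_card_add hQ]
  omega

lemma card_eq_and_card_inter_eq_one_of_sum_card_inter_add_one_eq (hQ : Q ∈ P) (hQt : #Q ≤ t)
    (h1 : ∀ R ∈ P, R ≠ Q → #(Q ∩ R) ≤ 1) (heq : ∑ R ∈ P, #(Q ∩ R) + 1 = #P + t) :
    #Q = t ∧ ∀ R ∈ P, R ≠ Q → #(Q ∩ R) = 1 := by
  have h1' : ∀ R ∈ P.erase Q, #(Q ∩ R) ≤ 1 :=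
    fun R hR => h1 R (mem_of_mem_erase hR) (ne_of_mem_erase hR)
  have hle : ∑ R ∈ P.erase Q, #(Q ∩ R) ≤ ∑ R ∈ P.erase Q, 1 := sum_le_sum h1'
  have := card_erase_add_one hQ
  rw [sum_card_inter_eq_card_add hQ] at heq
  rw [sum_const, smul_eq_mul, mul_one] at hle
  refine ⟨by omega, fun R hR hRQ => (sum_eq_sum_iff_of_le h1').mp ?_ R (mem_erase.mpr ⟨hRQ, hR⟩)⟩
  rw [sum_const, smul_eq_mul, mul_one]
  omega

end RowSums

namespace IsCliquePartition

variable [DecidableEq V] {G : SimpleGraph V} {P : Finset (Finset V)}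

lemma eq_of_mem_of_mem (hP : IsCliquePartition G P) {Q R : Finset V} (hQ : Q ∈ P) (hR : R ∈ P)
    {u v : V} (huv : u ≠ v) (huQ : u ∈ Q) (hvQ : v ∈ Q) (huR : u ∈ R) (hvR : v ∈ R) : Q = R :=
  (hP.2 u v (hP.1 Q hQ huQ hvQ huv)).unique ⟨hQ, huQ, hvQ⟩ ⟨hR, huR, hvR⟩

lemma card_inter_le_one (hP : IsCliquePartition G P) {Q R : Finset V} (hQ : Q ∈ P) (hR : R ∈ P)
    (hQR : Q ≠ R) : #(Q ∩ R) ≤ 1 := by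
  refine card_le_one.mpr fun u hu v hv => ?_
  by_contra huv
  rw [mem_inter] at hu hv
  exact hQR (hP.eq_of_mem_of_mem hQ hR huv hu.1 hv.1 hu.2 hv.2)

lemma erase_empty (hP : IsCliquePartition G P) : IsCliquePartition G (P.erase ∅) := by
  refine ⟨fun s hs => hP.1 s (mem_of_mem_erase hs), fun u v huv => ?_⟩
  obtain ⟨s, ⟨hs, hu, hv⟩, huniq⟩ := hP.2 u v huv
  exact ⟨s, ⟨mem_erase.mpr ⟨ne_empty_of_mem hu, hs⟩, hu, hv⟩,
    fun s' hs' => huniq s' ⟨mem_of_mem_erase hs'.1, hs'.2⟩⟩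

variable [DecidableRel G.Adj]

lemma card_filter_mem_mem (hP : IsCliquePartition G P) (u v : V) :
    #{Q ∈ P | u ∈ Q ∧ v ∈ Q} =
      (if G.Adj u v then 1 else 0) + if u = v then #{Q ∈ P | u ∈ Q} else 0 := by
  by_cases huv : u = v
  · subst huv
    simp
  by_cases hadj : G.Adj u v
  · obtain ⟨Q, hQ, huniq⟩ := hP.2 u v hadj
    rw [if_pos hadj, if_neg huv, card_eq_one]
    exact ⟨Q, by ext R; simpa using ⟨huniq R, fun h => h ▸ hQ⟩⟩
  · rw [if_neg hadj, if_neg huv, card_eq_zero, filter_eq_empty_iff]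
    exact fun Q hQ ⟨hu, hv⟩ => hadj (hP.1 Q hQ hu hv huv)

lemma degree_eq_sum [Fintype V] (hP : IsCliquePartition G P) (v : V) :
    G.degree v = ∑ Q ∈ P with v ∈ Q, (#Q - 1) := by
  have hnbr : G.neighborFinset v = {Q ∈ P | v ∈ Q}.biUnion (·.erase v) := by
    ext u
    simp only [mem_neighborFinset, mem_biUnion, mem_filter, mem_erase]
    constructor
    · intro hvu
      obtain ⟨Q, ⟨hQ, hv, hu⟩, -⟩ := hP.2 v u hvu
      exact ⟨Q, ⟨hQ, hv⟩, hvu.ne', hu⟩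
    · rintro ⟨Q, ⟨hQ, hv⟩, huv, hu⟩
      exact hP.1 Q hQ hv hu huv.symm
  rw [← card_neighborFinset_eq_degree, hnbr, card_biUnion]
  · exact sum_congr rfl fun Q hQ => card_erase_of_mem (mem_filter.mp hQ).2
  · intro Q hQ R hR hQR
    simp only [coe_filter, Set.mem_ofPred_eq] at hQ hR
    refine disjoint_left.mpr fun u huQ huR => hQR ?_
    rw [mem_erase] at huQ huR
    exact hP.eq_of_mem_of_mem hQ.1 hR.1 huQ.1 huQ.2 hQ.2 huR.2 hR.2

lemma degree_le_card_filter_mem_mul [Fintype V] (hP : IsCliquePartition G P) {t : ℕ}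
    (hPt : ∀ Q ∈ P, #Q ≤ t) (v : V) : G.degree v ≤ #{Q ∈ P | v ∈ Q} * (t - 1) := by
  rw [hP.degree_eq_sum]
  exact sum_le_card_nsmul _ _ _ fun Q hQ => Nat.sub_le_sub_right (hPt Q (mem_filter.mp hQ).1) 1

lemma degree_eq_card_filter_mem_mul [Fintype V] (hP : IsCliquePartition G P) {t : ℕ}
    (hPt : ∀ Q ∈ P, #Q = t) (v : V) : G.degree v = #{Q ∈ P | v ∈ Q} * (t - 1) := by
  rw [hP.degree_eq_sum, sum_congr rfl fun Q hQ => by rw [hPt Q (mem_filter.mp hQ).1], sum_const,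
    smul_eq_mul]

end IsCliquePartition

lemma isCliquePartition_cliqueFinset_two [Fintype V] [DecidableEq V] (G : SimpleGraph V)
    [DecidableRel G.Adj] : IsCliquePartition G (G.cliqueFinset 2) := by
  refine ⟨fun s hs => (mem_cliqueFinset_iff.mp hs).isClique, fun u v huv => ⟨{u, v}, ?_, ?_⟩⟩
  · simp [mem_cliqueFinset_iff, isNClique_iff, huv, huv.ne]
  · rintro s ⟨hs, hu, hv⟩
    refine (eq_of_subset_of_card_le (insert_subset hu (singleton_subset_iff.mpr hv)) ?_).symm
    rw [(mem_cliqueFinset_iff.mp hs).card_eq, card_pair huv.ne]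

lemma cpT_le [DecidableEq V] {G : SimpleGraph V} {P : Finset (Finset V)} {t : ℕ}
    (hP : IsCliquePartition G P) (hPt : ∀ Q ∈ P, #Q ≤ t) : cpT G t ≤ #P :=
  Nat.sInf_le ⟨P, hP, hPt, rfl⟩

lemma exists_isCliquePartition_card_eq_cpT [Fintype V] [DecidableEq V] (G : SimpleGraph V)
    {t : ℕ} (ht : 2 ≤ t) :
    ∃ P : Finset (Finset V), IsCliquePartition G P ∧ (∀ Q ∈ P, #Q ≤ t) ∧ #P = cpT G t := by
  classical
  have hadmissible : {m | ∃ P : Finset (Finset V),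
      IsCliquePartition G P ∧ (∀ Q ∈ P, #Q ≤ t) ∧ #P = m}.Nonempty :=
    ⟨_, _, isCliquePartition_cliqueFinset_two G,
      fun Q hQ => (mem_cliqueFinset_iff.mp hQ).card_eq ▸ ht, rfl⟩
  exact Nat.sInf_mem hadmissible

lemma IsCliquePartition.nonempty_of_card_eq_cpT [DecidableEq V] {G : SimpleGraph V}
    {P : Finset (Finset V)} {t : ℕ} (hP : IsCliquePartition G P) (hPt : ∀ Q ∈ P, #Q ≤ t)
    (hPcard : #P = cpT G t) {Q : Finset V} (hQ : Q ∈ P) : Q.Nonempty := by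
  refine nonempty_iff_ne_empty.mpr fun hQ₀ => ?_
  have := cpT_le hP.erase_empty fun s hs => hPt s (mem_of_mem_erase hs)
  rw [card_erase_of_mem (hQ₀ ▸ hQ)] at this
  have := card_pos.mpr ⟨Q, hQ⟩
  omega

namespace IsCliquePartition

variable [Fintype V] [DecidableEq V] {G : SimpleGraph V} [DecidableRel G.Adj]
  {P : Finset (Finset V)} {t : ℕ}

lemma sum_sq_sum_eq (hP : IsCliquePartition G P) (x : V → ℝ) :
    ∑ Q ∈ P, (∑ v ∈ Q, x v) ^ 2 =
      x ⬝ᵥ G.adjMatrix ℝ *ᵥ x + ∑ v, (#{Q ∈ P | v ∈ Q} : ℝ) * x v ^ 2 := by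
  have := sum_sq_sum_filter P univ (fun Q v => v ∈ Q) x
  simp only [filter_univ_mem] at this
  rw [this]
  simp [hP.card_filter_mem_mem, add_mul, sum_add_distrib, dotProduct, mulVec, adjMatrix_apply,
    mul_sum, ite_mul, sq]

lemma ceil_minDegree_div_le (hP : IsCliquePartition G P) (ht : 2 ≤ t) (hPt : ∀ Q ∈ P, #Q ≤ t)
    (v : V) : (⌈(G.minDegree : ℝ) / ((t : ℝ) - 1)⌉ : ℝ) ≤ #{Q ∈ P | v ∈ Q} := by
  have hdeg : G.minDegree ≤ #{Q ∈ P | v ∈ Q} * (t - 1) :=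
    (G.minDegree_le_degree v).trans (hP.degree_le_card_filter_mem_mul hPt v)
  have ht' : (0 : ℝ) < t - 1 := by
    have : (2 : ℝ) ≤ t := by exact_mod_cast ht
    linarith
  have hdiv : (G.minDegree : ℝ) / ((t : ℝ) - 1) ≤ #{Q ∈ P | v ∈ Q} := by
    rw [div_le_iff₀ ht', ← Nat.cast_one, ← Nat.cast_sub (by omega)]
    exact_mod_cast hdeg
  exact_mod_cast Int.ceil_le.mpr (by exact_mod_cast hdiv)

theorem card_filter_mem_eq_ceil_and_card_eq_of_specRad_add_ceil_eq (hP : IsCliquePartition G P)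
    (hG : G.Connected) (ht : 2 ≤ t) (hPt : ∀ Q ∈ P, #Q ≤ t) (hP₀ : ∀ Q ∈ P, Q.Nonempty)
    (heq : specRad G + ⌈(G.minDegree : ℝ) / ((t : ℝ) - 1)⌉ = #P + t - 1) :
    (∀ v, (#{Q ∈ P | v ∈ Q} : ℝ) = ⌈(G.minDegree : ℝ) / ((t : ℝ) - 1)⌉) ∧
      ∀ Q ∈ P, #Q = t ∧ ∀ R ∈ P, R ≠ Q → #(Q ∩ R) = 1 := by
  obtain ⟨x, hx, hAx⟩ := hG.exists_pos_adjMatrix_mulVec_eq_specRad_smul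
  have hq := hP.ceil_minDegree_div_le ht hPt
  set q : ℝ := ((⌈(G.minDegree : ℝ) / ((t : ℝ) - 1)⌉ : ℤ) : ℝ)
  have hinter : ∀ {Q}, Q ∈ P → ∀ R ∈ P, R ≠ Q → #(Q ∩ R) ≤ 1 :=
    fun hQ _ hR hRQ => hP.card_inter_le_one hQ hR hRQ.symm
  have hrow : ∀ Q ∈ P, ∑ R ∈ P, (#(Q ∩ R) : ℝ) ≤ #P + t - 1 := fun Q hQ => by
    have : ((∑ R ∈ P, #(Q ∩ R) + 1 : ℕ) : ℝ) ≤ ((#P + t : ℕ) : ℝ) :=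
      Nat.cast_le.mpr (sum_card_inter_add_one_le hQ (hPt Q hQ) (hinter hQ))
    push_cast at this
    linarith
  have hid : ∑ Q ∈ P, (∑ v ∈ Q, x v) ^ 2 =
      specRad G * ∑ v, x v ^ 2 + ∑ v, (#{Q ∈ P | v ∈ Q} : ℝ) * x v ^ 2 := by
    rw [hP.sum_sq_sum_eq, hAx, dotProduct_smul, smul_eq_mul]
    simp [dotProduct, sq]
  have hqX : q * ∑ v, x v ^ 2 ≤ ∑ v, (#{Q ∈ P | v ∈ Q} : ℝ) * x v ^ 2 := by
    rw [mul_sum]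
    exact sum_le_sum fun v _ => mul_le_mul_of_nonneg_right (hq v) (sq_nonneg _)
  have hc0 : (0 : ℝ) ≤ #P + t - 1 := by
    have : (2 : ℝ) ≤ t := by exact_mod_cast ht
    linarith [(#P).cast_nonneg (α := ℝ)]
  have hle := sum_sq_sum_le_mul_sum_sq (x := x) hrow hc0
  -- `heq` squeezes `∑_Q (∑_{v∈Q} x_v)²` to `(ρ + q) ‖x‖²` from both sides.
  rw [← heq, add_mul] at hle
  refine ⟨fun v => ?_, fun Q hQ => ?_⟩
  · refine (eq_of_le_of_sum_mul_le (s := univ) (fun v _ => hq v)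
      (fun v _ => pow_pos (hx v) 2) ?_ v (mem_univ v)).symm
    rw [← mul_sum]
    linarith
  · have hQrow := sum_card_inter_eq_of_mul_sum_sq_le hrow hx hP₀
      (by rw [← heq, add_mul]; linarith) hQ
    refine card_eq_and_card_inter_eq_one_of_sum_card_inter_add_one_eq hQ (hPt Q hQ) (hinter hQ) ?_
    exact_mod_cast (by push_cast; linarith : ((∑ R ∈ P, #(Q ∩ R) + 1 : ℕ) : ℝ) = #P + t)

end IsCliquePartition

theorem regular_decomposition_of_cpT_eq_general [Fintype V] [DecidableEq V] (G : SimpleGraph V)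
    [DecidableRel G.Adj] (t : ℕ) (ht : 2 ≤ t) (hconn : G.Connected)
    (heq : (cpT G t : ℝ) = specRad G - t + 1 + (⌈(G.minDegree : ℝ) / ((t : ℝ) - 1)⌉ : ℤ)) :
    (t - 1) ∣ G.minDegree ∧ G.IsRegularOfDegree G.minDegree ∧
      ∃ P : Finset (Finset V), IsCliquePartition G P ∧ (∀ s ∈ P, s.card = t) ∧
        ∀ s₁ ∈ P, ∀ s₂ ∈ P, s₁ ≠ s₂ → (s₁ ∩ s₂).card = 1 := by
  obtain ⟨P, hP, hPt, hPcard⟩ := exists_isCliquePartition_card_eq_cpT G ht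
  obtain ⟨hm, htight⟩ := hP.card_filter_mem_eq_ceil_and_card_eq_of_specRad_add_ceil_eq hconn ht
    hPt (fun Q => hP.nonempty_of_card_eq_cpT hPt hPcard) (by rw [hPcard]; linarith)
  have hdeg := hP.degree_eq_card_filter_mem_mul fun Q hQ => (htight Q hQ).1
  have := hconn.nonempty
  obtain ⟨v₀, hv₀⟩ := G.exists_minimal_degree_vertex
  refine ⟨hv₀ ▸ hdeg v₀ ▸ dvd_mul_left _ _, fun v => ?_, P, hP, fun s hs => (htight s hs).1,
    fun s₁ h₁ s₂ h₂ hne => (htight s₁ h₁).2 s₂ h₂ hne.symm⟩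
  rw [hdeg v, hv₀, hdeg v₀, Nat.cast_inj.mp ((hm v).trans (hm v₀).symm)]

/-- Equality case of the spectral lower bound for `cp^{(t)}(G)`:
if `cp^{(t)}(G) = ρ(G) − t + 1 + ⌈δ(G)/(t−1)⌉`, then `t−1` divides `δ(G)`, `G` is
regular of degree `δ(G)`, and `G` admits a `K_t`-decomposition in which any two
distinct cliques intersect in exactly one vertex. -/
theorem regular_decomposition_of_cpT_eq [Fintype V] [DecidableEq V] (G : SimpleGraph V)
    [DecidableRel G.Adj] (t : ℕ) (ht : 2 ≤ t) (hconn : G.Connected)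
    (hedge : G.edgeSet.Nonempty)
    (heq : (cpT G t : ℝ) = specRad G - t + 1 + (⌈(G.minDegree : ℝ) / ((t : ℝ) - 1)⌉ : ℤ)) :
    (t - 1) ∣ G.minDegree ∧ G.IsRegularOfDegree G.minDegree ∧
      ∃ P : Finset (Finset V), IsCliquePartition G P ∧ (∀ s ∈ P, s.card = t) ∧
        ∀ s₁ ∈ P, ∀ s₂ ∈ P, s₁ ≠ s₂ → (s₁ ∩ s₂).card = 1 :=
  regular_decomposition_of_cpT_eq_general G t ht hconn heq
end

section
/- Let G be a finite connected simple graph with at least one edge, minimum degree δ(G), spectral radius ρ(G), and clique number ω(G). Then cp(G) ≥ ρ(G) − ω(G) + 1 + ⌈δ(G)/(ω(G)−1)⌉. -/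
open Finset SimpleGraph Polynomial

variable {V : Type*}

section Aux

variable [Fintype V] [DecidableEq V] {G : SimpleGraph V} [DecidableRel G.Adj]
  {P : Finset (Finset V)}

/-- The number of cliques of a partition containing a given pair of distinct vertices is
`1` if they are adjacent and `0` otherwise. -/
lemma pair_count (hP : IsCliquePartition G P) {v u : V} (hvu : v ≠ u) :
    (P.filter fun Q => v ∈ Q ∧ u ∈ Q).card = if G.Adj v u then 1 else 0 := by
  by_cases h : G.Adj v u
  · obtain ⟨s, ⟨hsP, hvs, hus⟩, huniq⟩ := hP.2 v u h
    rw [if_pos h, Finset.card_eq_one]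
    refine ⟨s, ?_⟩
    ext Q
    simp only [Finset.mem_filter, Finset.mem_singleton]
    constructor
    · rintro ⟨h1, h2, h3⟩; exact huniq Q ⟨h1, h2, h3⟩
    · rintro rfl; exact ⟨hsP, hvs, hus⟩
  · rw [if_neg h, Finset.card_eq_zero, Finset.filter_eq_empty_iff]
    rintro Q hQ ⟨hv, hu⟩
    exact h (hP.1 Q hQ (Finset.mem_coe.mpr hv) (Finset.mem_coe.mpr hu) hvu)

/-- Two distinct cliques of a partition share at most one vertex. -/
lemma inter_card_le_one (hP : IsCliquePartition G P) {Q Q' : Finset V}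
    (hQ : Q ∈ P) (hQ' : Q' ∈ P) (hne : Q ≠ Q') : (Q ∩ Q').card ≤ 1 := by
  by_contra h
  push_neg at h
  obtain ⟨a, ha, b, hb, hab⟩ := Finset.one_lt_card.mp h
  rw [Finset.mem_inter] at ha hb
  have hadj : G.Adj a b :=
    hP.1 Q hQ (Finset.mem_coe.mpr ha.1) (Finset.mem_coe.mpr hb.1) hab
  obtain ⟨s, -, huniq⟩ := hP.2 a b hadj
  exact hne ((huniq Q ⟨hQ, ha.1, hb.1⟩).trans (huniq Q' ⟨hQ', ha.2, hb.2⟩).symm)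

/-- Exchanging a sum over cliques and a sum over the vertices of cliques. -/
lemma swap_sum (P : Finset (Finset V)) (f : V → Finset V → ℝ) :
    ∑ Q ∈ P, ∑ v ∈ Q, f v Q = ∑ v : V, ∑ Q ∈ P.filter (fun Q => v ∈ Q), f v Q := by
  simp_rw [Finset.sum_filter]
  rw [Finset.sum_comm]
  exact Finset.sum_congr rfl fun Q _ => (Fintype.sum_ite_mem Q (fun v => f v Q)).symm

/-- Expansion of the square of a sum over a finset. -/
lemma clique_sq (Q : Finset V) (x : V → ℝ) :
    (∑ v ∈ Q, x v) ^ 2 = (∑ v ∈ Q, (x v) ^ 2) + ∑ v ∈ Q, ∑ u ∈ Q.erase v, x v * x u := by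
  rw [sq, Finset.sum_mul_sum, ← Finset.sum_add_distrib]
  refine Finset.sum_congr rfl fun v hv => ?_
  rw [← Finset.add_sum_erase Q (fun u => x v * x u) hv, sq]

/-- Sum over the cliques of a partition of the off-diagonal quadratic contributions
equals the quadratic form of the adjacency matrix. -/
lemma pairsum (hP : IsCliquePartition G P) (x : V → ℝ) :
    ∑ Q ∈ P, ∑ v ∈ Q, ∑ u ∈ Q.erase v, x v * x u
      = ∑ v : V, ∑ u ∈ G.neighborFinset v, x v * x u := by
  rw [swap_sum]
  refine Finset.sum_congr rfl fun v _ => ?_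
  have h1 : ∀ Q : Finset V, ∑ u ∈ Q.erase v, x v * x u
      = ∑ u : V, if u ∈ Q.erase v then x v * x u else 0 := fun Q =>
    (Fintype.sum_ite_mem (Q.erase v) (fun u => x v * x u)).symm
  have h2 : ∀ u : V, ∑ Q ∈ P.filter (fun Q => v ∈ Q), (if u ∈ Q.erase v then x v * x u else 0)
      = if G.Adj v u then x v * x u else 0 := by
    intro u
    by_cases hvu : v = u
    · subst hvu
      simp [G.irrefl]
    · have hne' : u ≠ v := Ne.symm hvu
      rw [← Finset.sum_filter]
      have heq : (P.filter (fun Q => v ∈ Q)).filter (fun Q => u ∈ Q.erase v)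
          = P.filter (fun Q => v ∈ Q ∧ u ∈ Q) := by
        rw [Finset.filter_filter]
        apply Finset.filter_congr
        intro Q _
        simp [Finset.mem_erase, hne']
      rw [heq, Finset.sum_const, pair_count hP hvu]
      split_ifs <;> simp
  have h3 : ∑ u ∈ G.neighborFinset v, x v * x u
      = ∑ u : V, if G.Adj v u then x v * x u else 0 := by
    rw [← Fintype.sum_ite_mem (G.neighborFinset v) (fun u => x v * x u)]
    refine Finset.sum_congr rfl fun u _ => ?_
    simp only [SimpleGraph.mem_neighborFinset]
  simp_rw [h1]
  rw [Finset.sum_comm, h3]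
  exact Finset.sum_congr rfl fun u _ => h2 u

/-- The degree of a vertex is at most the total size (minus one each) of the cliques
of the partition containing it. -/
lemma degree_le_sum (hP : IsCliquePartition G P) (v : V) :
    G.degree v ≤ ∑ Q ∈ P.filter (fun Q => v ∈ Q), (Q.card - 1) := by
  have hsub : G.neighborFinset v ⊆
      (P.filter (fun Q => v ∈ Q)).biUnion (fun Q => Q.erase v) := by
    intro w hw
    rw [SimpleGraph.mem_neighborFinset] at hw
    obtain ⟨s, ⟨hsP, hvs, hws⟩, -⟩ := hP.2 v w hw
    exact Finset.mem_biUnion.mpr ⟨s, Finset.mem_filter.mpr ⟨hsP, hvs⟩,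
      Finset.mem_erase.mpr ⟨(G.ne_of_adj hw).symm, hws⟩⟩
  calc G.degree v = (G.neighborFinset v).card := (G.card_neighborFinset_eq_degree v).symm
    _ ≤ ((P.filter (fun Q => v ∈ Q)).biUnion (fun Q => Q.erase v)).card :=
        Finset.card_le_card hsub
    _ ≤ ∑ Q ∈ P.filter (fun Q => v ∈ Q), (Q.erase v).card := Finset.card_biUnion_le
    _ = ∑ Q ∈ P.filter (fun Q => v ∈ Q), (Q.card - 1) := by
        refine Finset.sum_congr rfl fun Q hQ => ?_
        rw [Finset.card_erase_of_mem (Finset.mem_filter.mp hQ).2]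

/-- The key "row-sum" bound: for any real weights `x`, the sum over a clique partition of
the squares of the clique sums is at most `(ω + |P| - 1)` times the sum of squares. -/
lemma rowsum_bound (hP : IsCliquePartition G P) (hω : 1 ≤ G.cliqueNum) (x : V → ℝ) :
    ∑ Q ∈ P, (∑ v ∈ Q, x v) ^ 2
      ≤ ((G.cliqueNum : ℝ) + P.card - 1) * ∑ v : V, (x v) ^ 2 := by
  set s : Finset V → ℝ := fun Q => ∑ v ∈ Q, x v with hs
  set c : ℝ := (G.cliqueNum : ℝ) + P.card - 1 with hc
  have hc0 : (0 : ℝ) ≤ c := by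
    have : (1 : ℝ) ≤ (G.cliqueNum : ℝ) := by exact_mod_cast hω
    have : (0 : ℝ) ≤ (P.card : ℝ) := by positivity
    simp only [hc]; linarith
  set T : ℝ := ∑ Q ∈ P, (s Q) ^ 2 with hT
  set S : ℝ := ∑ v : V, (x v) ^ 2 with hS
  have hT0 : 0 ≤ T := Finset.sum_nonneg fun Q _ => sq_nonneg _
  have hS0 : 0 ≤ S := Finset.sum_nonneg fun v _ => sq_nonneg _
  -- Step 1 : T = ∑ v, x v * z v
  have step1 : T = ∑ v : V, x v * ∑ Q ∈ P.filter (fun Q => v ∈ Q), s Q := by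
    have e1 : T = ∑ Q ∈ P, ∑ v ∈ Q, (x v * s Q) := by
      refine Finset.sum_congr rfl fun Q _ => ?_
      rw [sq, Finset.sum_mul]
    rw [e1, swap_sum]
    exact Finset.sum_congr rfl fun v _ => (Finset.mul_sum _ _ _).symm
  -- Step 2 : Cauchy-Schwarz
  have step2 : T ^ 2 ≤ S * ∑ v : V, (∑ Q ∈ P.filter (fun Q => v ∈ Q), s Q) ^ 2 := by
    rw [step1]
    exact Finset.sum_mul_sq_le_sq_mul_sq Finset.univ x
      (fun v => ∑ Q ∈ P.filter (fun Q => v ∈ Q), s Q)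
  -- Step 3 : row-sum bound
  have step3 : ∑ v : V, (∑ Q ∈ P.filter (fun Q => v ∈ Q), s Q) ^ 2 ≤ c * T := by
    have e2 : ∀ v : V, (∑ Q ∈ P.filter (fun Q => v ∈ Q), s Q) ^ 2
        ≤ ∑ Q ∈ P.filter (fun Q => v ∈ Q), ∑ Q' ∈ P.filter (fun Q => v ∈ Q), (s Q) ^ 2 := by
      intro v
      rw [sq, Finset.sum_mul_sum]
      have e3 : ∑ Q ∈ P.filter (fun Q => v ∈ Q), ∑ Q' ∈ P.filter (fun Q => v ∈ Q), s Q * s Q'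
          ≤ ∑ Q ∈ P.filter (fun Q => v ∈ Q), ∑ Q' ∈ P.filter (fun Q => v ∈ Q),
              ((s Q) ^ 2 + (s Q') ^ 2) / 2 := by
        refine Finset.sum_le_sum fun Q _ => Finset.sum_le_sum fun Q' _ => ?_
        nlinarith [sq_nonneg (s Q - s Q')]
      refine e3.trans (le_of_eq ?_)
      have e4 : ∑ Q ∈ P.filter (fun Q => v ∈ Q), ∑ Q' ∈ P.filter (fun Q => v ∈ Q),
          ((s Q) ^ 2 + (s Q') ^ 2) / 2
          = (∑ Q ∈ P.filter (fun Q => v ∈ Q), ∑ Q' ∈ P.filter (fun Q => v ∈ Q), (s Q) ^ 2) / 2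
            + (∑ Q ∈ P.filter (fun Q => v ∈ Q), ∑ Q' ∈ P.filter (fun Q => v ∈ Q),
                (s Q') ^ 2) / 2 := by
        simp_rw [add_div, Finset.sum_add_distrib, Finset.sum_div]
      rw [e4, Finset.sum_comm (γ := Finset V)]
      ring
    have e5 : ∑ v : V, (∑ Q ∈ P.filter (fun Q => v ∈ Q), s Q) ^ 2
        ≤ ∑ v : V, ∑ Q ∈ P.filter (fun Q => v ∈ Q), ∑ Q' ∈ P.filter (fun Q => v ∈ Q),
            (s Q) ^ 2 := Finset.sum_le_sum fun v _ => e2 v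
    refine e5.trans ?_
    -- rewrite the triple sum as ∑ Q ∑ Q' |Q ∩ Q'| * s Q ^ 2
    have e6 : ∑ v : V, ∑ Q ∈ P.filter (fun Q => v ∈ Q), ∑ Q' ∈ P.filter (fun Q => v ∈ Q),
          (s Q) ^ 2
        = ∑ Q ∈ P, ∑ Q' ∈ P, ((Q ∩ Q').card : ℝ) * (s Q) ^ 2 := by
      rw [← swap_sum P (fun v Q => ∑ Q' ∈ P.filter (fun R => v ∈ R), (s Q) ^ 2)]
      refine Finset.sum_congr rfl fun Q _ => ?_
      have e7 : ∀ v : V, ∑ Q' ∈ P.filter (fun R => v ∈ R), (s Q) ^ 2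
          = ∑ Q' ∈ P, if v ∈ Q' then (s Q) ^ 2 else 0 := by
        intro v; rw [Finset.sum_filter]
      simp_rw [e7]
      rw [Finset.sum_comm]
      refine Finset.sum_congr rfl fun Q' _ => ?_
      rw [Finset.sum_ite_mem, Finset.sum_const, nsmul_eq_mul]
    rw [e6]
    have e8 : ∀ Q ∈ P, ∑ Q' ∈ P, ((Q ∩ Q').card : ℝ) * (s Q) ^ 2 ≤ c * (s Q) ^ 2 := by
      intro Q hQ
      have e9 : ∑ Q' ∈ P, ((Q ∩ Q').card : ℝ) ≤ c := by
        rw [← Finset.add_sum_erase P (fun Q' => ((Q ∩ Q').card : ℝ)) hQ]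
        have h1 : ((Q ∩ Q).card : ℝ) ≤ (G.cliqueNum : ℝ) := by
          rw [Finset.inter_self]
          exact_mod_cast SimpleGraph.IsClique.card_le_cliqueNum (tc := hP.1 Q hQ)
        have h2 : ∑ Q' ∈ P.erase Q, ((Q ∩ Q').card : ℝ) ≤ ((P.erase Q).card : ℝ) := by
          calc ∑ Q' ∈ P.erase Q, ((Q ∩ Q').card : ℝ)
              ≤ ∑ Q' ∈ P.erase Q, (1 : ℝ) := by
                refine Finset.sum_le_sum fun Q' hQ' => ?_
                have := inter_card_le_one hP hQ (Finset.mem_of_mem_erase hQ')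
                  (Ne.symm (Finset.ne_of_mem_erase hQ'))
                exact_mod_cast this
            _ = ((P.erase Q).card : ℝ) := by simp
        have h3 : ((P.erase Q).card : ℝ) = (P.card : ℝ) - 1 := by
          rw [Finset.card_erase_of_mem hQ]
          have : 1 ≤ P.card := Finset.card_pos.mpr ⟨Q, hQ⟩
          push_cast [Nat.cast_sub this]
          ring
        simp only [hc]
        linarith
      calc ∑ Q' ∈ P, ((Q ∩ Q').card : ℝ) * (s Q) ^ 2
          = (∑ Q' ∈ P, ((Q ∩ Q').card : ℝ)) * (s Q) ^ 2 := by rw [Finset.sum_mul]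
        _ ≤ c * (s Q) ^ 2 := mul_le_mul_of_nonneg_right e9 (sq_nonneg _)
    calc ∑ Q ∈ P, ∑ Q' ∈ P, ((Q ∩ Q').card : ℝ) * (s Q) ^ 2
        ≤ ∑ Q ∈ P, c * (s Q) ^ 2 := Finset.sum_le_sum e8
      _ = c * T := by rw [hT, Finset.mul_sum]
  -- Conclude : T ≤ c * S
  rcases eq_or_lt_of_le hT0 with h | h
  · rw [← h]
    positivity
  · have : T ^ 2 ≤ S * (c * T) := step2.trans (by
      exact mul_le_mul_of_nonneg_left step3 hS0)
    nlinarith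

end Aux

/-- Spectral lower bound for the clique partition number:
`cp(G) ≥ ρ(G) − ω(G) + 1 + ⌈δ(G)/(ω(G)−1)⌉`. -/
theorem cp_ge_specRad [Fintype V] [DecidableEq V] (G : SimpleGraph V) [DecidableRel G.Adj]
    (hconn : G.Connected) (hedge : G.edgeSet.Nonempty) :
    specRad G - G.cliqueNum + 1 +
      (⌈(G.minDegree : ℝ) / ((G.cliqueNum : ℝ) - 1)⌉ : ℤ) ≤ (cp G : ℝ) := by
  classical
  have hV : Nonempty V := hconn.nonempty
  obtain ⟨u₀, v₀, huv₀⟩ : ∃ u v : V, G.Adj u v := by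
    obtain ⟨e, he⟩ := hedge
    induction e using Sym2.ind with
    | _ u v => exact ⟨u, v, he⟩
  have hω2 : 2 ≤ G.cliqueNum := by
    have hclique : G.IsClique (({u₀, v₀} : Finset V) : Set V) := by
      rw [Finset.coe_insert, Finset.coe_singleton]
      exact SimpleGraph.isClique_pair.mpr fun _ => huv₀
    have hcard : ({u₀, v₀} : Finset V).card = 2 := Finset.card_pair (G.ne_of_adj huv₀)
    calc 2 = ({u₀, v₀} : Finset V).card := hcard.symm
      _ ≤ G.cliqueNum := SimpleGraph.IsClique.card_le_cliqueNum (tc := hclique)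
  have hωR : (2 : ℝ) ≤ (G.cliqueNum : ℝ) := by exact_mod_cast hω2
  have hω1 : 1 ≤ G.cliqueNum := by omega
  have hωpos : (0 : ℝ) < (G.cliqueNum : ℝ) - 1 := by linarith
  -- a clique partition attaining `cp G`
  have hne : {m | ∃ P : Finset (Finset V), IsCliquePartition G P ∧ P.card = m}.Nonempty := by
    refine ⟨_, Finset.image (fun p : V × V => ({p.1, p.2} : Finset V))
      (Finset.univ.filter fun p : V × V => G.Adj p.1 p.2), ⟨?_, ?_⟩, rfl⟩
    · intro s hs
      obtain ⟨p, hp, rfl⟩ := Finset.mem_image.mp hs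
      rw [Finset.mem_filter] at hp
      rw [Finset.coe_insert, Finset.coe_singleton]
      exact SimpleGraph.isClique_pair.mpr fun _ => hp.2
    · intro u v huv
      refine ⟨({u, v} : Finset V), ⟨?_, ?_, ?_⟩, ?_⟩
      · exact Finset.mem_image.mpr ⟨(u, v), Finset.mem_filter.mpr ⟨Finset.mem_univ _, huv⟩, rfl⟩
      · exact Finset.mem_insert_self _ _
      · exact Finset.mem_insert_of_mem (Finset.mem_singleton_self _)
      · rintro s ⟨hs, hus, hvs⟩
        obtain ⟨⟨a, b⟩, hp, rfl⟩ := Finset.mem_image.mp hs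
        have hne' : u ≠ v := G.ne_of_adj huv
        simp only [Finset.mem_insert, Finset.mem_singleton] at hus hvs
        rcases hus with rfl | rfl <;> rcases hvs with rfl | rfl
        · exact absurd rfl hne'
        · rfl
        · exact Finset.pair_comm _ _
        · exact absurd rfl hne'
  obtain ⟨P, hP, hPcard⟩ : ∃ P : Finset (Finset V), IsCliquePartition G P ∧ P.card = cp G :=
    Nat.sInf_mem hne
  set r : ℤ := ⌈(G.minDegree : ℝ) / ((G.cliqueNum : ℝ) - 1)⌉ with hr
  -- every vertex is in at least `r` cliques of the partition
  have hkr : ∀ v : V, (r : ℝ) ≤ ((P.filter fun Q => v ∈ Q).card : ℝ) := by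
    intro v
    have hd : G.degree v ≤ (P.filter fun Q => v ∈ Q).card * (G.cliqueNum - 1) := by
      calc G.degree v ≤ ∑ Q ∈ P.filter (fun Q => v ∈ Q), (Q.card - 1) := degree_le_sum hP v
        _ ≤ ∑ _Q ∈ P.filter (fun Q => v ∈ Q), (G.cliqueNum - 1) := by
            refine Finset.sum_le_sum fun Q hQ => ?_
            have : Q.card ≤ G.cliqueNum :=
              SimpleGraph.IsClique.card_le_cliqueNum
                (tc := hP.1 Q (Finset.mem_of_mem_filter _ hQ))
            omega
        _ = (P.filter fun Q => v ∈ Q).card * (G.cliqueNum - 1) := by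
            rw [Finset.sum_const, smul_eq_mul]
    have hdiv : (G.minDegree : ℝ) / ((G.cliqueNum : ℝ) - 1)
        ≤ ((P.filter fun Q => v ∈ Q).card : ℝ) := by
      rw [div_le_iff₀ hωpos]
      have h1 : (G.minDegree : ℝ) ≤ (G.degree v : ℝ) := by
        exact_mod_cast G.minDegree_le_degree v
      have h2 : ((G.degree v : ℕ) : ℝ)
          ≤ ((P.filter fun Q => v ∈ Q).card : ℝ) * (((G.cliqueNum - 1 : ℕ)) : ℝ) := by
        exact_mod_cast hd
      rw [Nat.cast_sub hω1, Nat.cast_one] at h2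
      linarith
    have hri : r ≤ ((P.filter fun Q => v ∈ Q).card : ℤ) :=
      Int.ceil_le.mpr (by exact_mod_cast hdiv)
    exact_mod_cast hri
  have hrcp : (r : ℝ) ≤ (P.card : ℝ) := by
    have h1 := hkr (Classical.arbitrary V)
    have h2 : ((P.filter fun Q => (Classical.arbitrary V) ∈ Q).card : ℝ) ≤ (P.card : ℝ) := by
      exact_mod_cast Finset.card_filter_le _ _
    linarith
  -- the spectral bound for every eigenvalue
  have hbound : ∀ μ ∈ {μ : ℝ | Module.End.HasEigenvalue (Matrix.toLin' (G.adjMatrix ℝ)) μ},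
      μ ≤ (G.cliqueNum : ℝ) + P.card - 1 - r := by
    intro μ hμ
    obtain ⟨x, hx⟩ := Module.End.HasEigenvalue.exists_hasEigenvector hμ
    have hAx : (G.adjMatrix ℝ).mulVec x = μ • x := by
      have h := hx.apply_eq_smul
      rwa [Matrix.toLin'_apply] at h
    obtain ⟨v₁, hv₁⟩ : ∃ v, x v ≠ 0 := Function.ne_iff.mp hx.2
    set S : ℝ := ∑ v : V, (x v) ^ 2 with hSdef
    have hSpos : 0 < S :=
      Finset.sum_pos' (fun v _ => sq_nonneg _) ⟨v₁, Finset.mem_univ _, by positivity⟩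
    have hE : μ * S = (∑ Q ∈ P, (∑ v ∈ Q, x v) ^ 2) - ∑ Q ∈ P, ∑ v ∈ Q, (x v) ^ 2 := by
      have h1 : ∑ v : V, x v * ((G.adjMatrix ℝ).mulVec x) v = μ * S := by
        rw [hAx, hSdef, Finset.mul_sum]
        refine Finset.sum_congr rfl fun v _ => ?_
        simp only [Pi.smul_apply, smul_eq_mul]
        ring
      rw [← h1]
      simp_rw [SimpleGraph.adjMatrix_mulVec_apply, Finset.mul_sum]
      rw [← pairsum hP x]
      have h3 : ∀ Q ∈ P, ∑ v ∈ Q, ∑ u ∈ Q.erase v, x v * x u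
          = (∑ v ∈ Q, x v) ^ 2 - ∑ v ∈ Q, (x v) ^ 2 := by
        intro Q _
        rw [clique_sq]
        ring
      rw [Finset.sum_congr rfl h3, Finset.sum_sub_distrib]
    have hT2 : ∑ Q ∈ P, ∑ v ∈ Q, (x v) ^ 2
        = ∑ v : V, ((P.filter fun Q => v ∈ Q).card : ℝ) * (x v) ^ 2 := by
      rw [swap_sum P (fun v _ => (x v) ^ 2)]
      exact Finset.sum_congr rfl fun v _ => by rw [Finset.sum_const, nsmul_eq_mul]
    have hlow : (r : ℝ) * S ≤ ∑ Q ∈ P, ∑ v ∈ Q, (x v) ^ 2 := by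
      rw [hT2, hSdef, Finset.mul_sum]
      exact Finset.sum_le_sum fun v _ =>
        mul_le_mul_of_nonneg_right (hkr v) (sq_nonneg _)
    have hTle : ∑ Q ∈ P, (∑ v ∈ Q, x v) ^ 2 ≤ ((G.cliqueNum : ℝ) + P.card - 1) * S :=
      rowsum_bound hP hω1 x
    have hfin : μ * S ≤ ((G.cliqueNum : ℝ) + P.card - 1 - r) * S := by
      rw [sub_mul]
      linarith
    exact le_of_mul_le_mul_right hfin hSpos
  have hcr0 : (0 : ℝ) ≤ (G.cliqueNum : ℝ) + P.card - 1 - r := by linarith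
  have hspec : specRad G ≤ (G.cliqueNum : ℝ) + P.card - 1 - r := by
    unfold specRad
    exact Real.sSup_le hbound hcr0
  have hPC : (P.card : ℝ) = (cp G : ℝ) := by exact_mod_cast hPcard
  linarith
end
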